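/- Fix a real number α > −1/2, a purely imaginary β, and an integer n ≥ 1. For t ∈ [0, π) define the inner product ⟨f, g⟩_t := (1/(2π))∫_t^{2π−t} f(e^{iθ}) · conj(g(e^{iθ})) · |e^{iθ}−1|^{2α} e^{iβ(θ−π)} dθ on polynomials, and for 0 ≤ k ≤ n let φ_k(·; t) be the monic polynomial of degree k with ⟨φ_k, z^j⟩_t = 0 for all 0 ≤ j < k (these monic orthogonal polynomials exist and are unique since the weight is positive on the arc), and set χ_k(t)^{−2} := ⟨φ_k, φ_k⟩_t > 0. Then the function t ↦ D_n(t) is differentiable on (0, π) and, with θ₁ = t, θ₂ = 2π − t and z_j = e^{iθ_j}: d/dt log D_n(t) = −(1/(2π)) · Σ_{j=1}^{2} |e^{iθ_j}−1|^{2α} e^{iβ(θ_j−π)} · Σ_{k=0}^{n−1} χ_k(t)² · |φ_k(z_j; t)|². -/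

import Mathlib

/-- The Fisher–Hartwig weight `|e^{iθ}−1|^{2α} e^{iβ(θ−π)}`. -/
noncomputable def fhWeight (α : ℝ) (β : ℂ) (θ : ℝ) : ℂ :=
  ((‖Complex.exp (Complex.I * θ) - 1‖) ^ (2 * α) : ℝ) *
    Complex.exp (Complex.I * β * ((θ : ℂ) - (Real.pi : ℂ)))

/-- The Toeplitz determinant `D_n(t)`: the determinant of the `n×n` matrix whose
`(j,k)` entry is `(1/2π)∫_t^{2π−t} |e^{iθ}−1|^{2α} e^{iβ(θ−π)} e^{−i(j−k)θ} dθ`. -/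
noncomputable def toeplitzD (α : ℝ) (β : ℂ) (n : ℕ) (t : ℝ) : ℂ :=
  Matrix.det (Matrix.of fun j k : Fin n =>
    (1 / (2 * (Real.pi : ℂ))) *
      ∫ θ in t..(2 * Real.pi - t),
        fhWeight α β θ * Complex.exp (-Complex.I * ((j.1 : ℂ) - (k.1 : ℂ)) * θ))

/-- The inner product `⟨f, g⟩_t = (1/2π)∫_t^{2π−t} f(e^{iθ}) conj(g(e^{iθ}))
|e^{iθ}−1|^{2α} e^{iβ(θ−π)} dθ` on polynomials. -/
noncomputable def fhInner (α : ℝ) (β : ℂ) (t : ℝ) (f g : Polynomial ℂ) : ℂ :=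
  (1 / (2 * (Real.pi : ℂ))) *
    ∫ θ in t..(2 * Real.pi - t),
      f.eval (Complex.exp (Complex.I * θ))
        * (starRingEnd ℂ) (g.eval (Complex.exp (Complex.I * θ)))
        * fhWeight α β θ

/-!
Write `T(t)` for the Toeplitz matrix, so that `D_n = det T`. Every entry of `T(t)` is an integral
over the arc `(t, 2π - t)`, so `T'(t) = -(1/2π) (w(θ₁) ū₁ u₁ᵀ + w(θ₂) ū₂ u₂ᵀ)` with `w` the
weight and `u_j = (z_j^k)_{k<n}`, and Jacobi's formula gives `D_n'/D_n = tr (T⁻¹ T')`. If `C` is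
the matrix of coefficients of `φ_0, …, φ_{n-1}`, orthogonality makes `C̄ T Cᵀ = diag (χ_k⁻²)`,
hence `T⁻¹ = Cᵀ diag (χ_k²) C̄` and `u_jᵀ T⁻¹ ū_j = Σ_k χ_k² |φ_k(z_j)|²`.
-/

open Matrix Finset Set Polynomial Complex
open scoped Real

namespace Matrix

section Derivative

variable {𝕜 : Type*} [NontriviallyNormedField 𝕜] {R : Type*} [NormedCommRing R]
  [NormedAlgebra 𝕜 R] {ι : Type*} [Fintype ι] [DecidableEq ι]

theorem sum_det_updateCol_eq_trace_adjugate_mul (A B : Matrix ι ι R) :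
    ∑ i, (A.updateCol i fun k => B k i).det = trace (A.adjugate * B) := by
  simp only [← cramer_apply, cramer_eq_adjugate_mulVec, trace, diag, mul_apply, mulVec,
    dotProduct]

theorem hasDerivAt_det {A : 𝕜 → Matrix ι ι R} {B : Matrix ι ι R} {t : 𝕜}
    (h : ∀ i j, HasDerivAt (fun x => A x i j) (B i j) t) :
    HasDerivAt (fun x => (A x).det) (trace ((A t).adjugate * B)) t := by
  have hcol (i : ι) (σ : Equiv.Perm ι) :
      ∏ j, (A t).updateCol i (fun k => B k i) (σ j) j
        = (∏ j ∈ univ.erase i, A t (σ j) j) • B (σ i) i := by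
    rw [← mul_prod_erase univ _ (mem_univ i), smul_eq_mul, mul_comm, updateCol_self]
    congr 1
    exact prod_congr rfl fun j hj => updateCol_ne (ne_of_mem_erase hj)
  rw [← sum_det_updateCol_eq_trace_adjugate_mul]
  simp only [det_apply', hcol]
  rw [sum_comm]
  simp only [← mul_sum]
  exact HasDerivAt.fun_sum fun σ _ =>
    (HasDerivAt.fun_finsetProd fun i _ => h (σ i) i).const_mul _

end Derivative

section Inverse

variable {R : Type*} [CommRing R] {ι : Type*} [Fintype ι] [DecidableEq ι]

theorem adjugate_eq_det_smul_of_mul_eq_one {A M : Matrix ι ι R} (h : A * M = 1) :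
    A.adjugate = A.det • M := by
  calc A.adjugate = M * A * A.adjugate := by rw [mul_eq_one_comm.mp h, Matrix.one_mul]
    _ = A.det • M := by rw [Matrix.mul_assoc, mul_adjugate, mul_smul_comm, Matrix.mul_one]

theorem mul_eq_one_of_mul_mul_eq_diagonal {P T Q : Matrix ι ι R} {e d : ι → R}
    (h : P * T * Q = diagonal e) (hed : ∀ i, e i * d i = 1) :
    T * (Q * diagonal d * P) = 1 := by
  have : P * (T * Q * diagonal d) = 1 := by
    rw [← Matrix.mul_assoc, ← Matrix.mul_assoc, h, diagonal_mul_diagonal, ← diagonal_one]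
    exact congrArg diagonal (funext hed)
  simpa only [Matrix.mul_assoc] using mul_eq_one_comm.mp this

end Inverse

theorem transpose_mul_diagonal_mul_map_conj_mulVec_star_dotProduct {m n : Type*} [Fintype m]
    [DecidableEq m] [Fintype n] (C : Matrix m n ℂ) (d : m → ℂ) (v : n → ℂ) :
    ((Cᵀ * diagonal d * C.map (starRingEnd ℂ)) *ᵥ star v) ⬝ᵥ v
      = ∑ i, d i * normSq ((C *ᵥ v) i) := by
  have hconj : C.map (starRingEnd ℂ) *ᵥ star v = star (C *ᵥ v) := by
    ext i
    exact (RingHom.map_mulVec (starRingEnd ℂ) C v i).symm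
  rw [dotProduct_comm, ← mulVec_mulVec, ← mulVec_mulVec, hconj, dotProduct_mulVec,
    vecMul_transpose, dotProduct]
  refine sum_congr rfl fun i _ => ?_
  rw [mulVec_diagonal, Pi.star_apply, star_def, ← mul_assoc, mul_comm _ (d i), mul_assoc,
    mul_conj]

end Matrix

namespace intervalIntegral

theorem integral_conj {f : ℝ → ℂ} {a b : ℝ} :
    ∫ x in a..b, (starRingEnd ℂ) (f x) = (starRingEnd ℂ) (∫ x in a..b, f x) := by
  simp only [intervalIntegral_eq_integral_uIoc, ← _root_.integral_conj, real_smul, map_mul,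
    conj_ofReal]

theorem hasDerivAt_integral_reflected {E : Type*} [NormedAddCommGroup E] [NormedSpace ℝ E]
    [CompleteSpace E] {f : ℝ → E} {U : Set ℝ} {c t : ℝ} (hU : IsOpen U) (hf : ContinuousOn f U)
    (hsub : uIcc t (c - t) ⊆ U) :
    HasDerivAt (fun x => ∫ θ in x..(c - x), f θ) (-(f t + f (c - t))) t := by
  have hmem_t : t ∈ U := hsub left_mem_uIcc
  have hmem_ct : c - t ∈ U := hsub right_mem_uIcc
  have hF := integral_hasFDerivAt (hf.mono hsub).intervalIntegrable
    (hf.stronglyMeasurableAtFilter hU t hmem_t) (hf.stronglyMeasurableAtFilter hU _ hmem_ct)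
    (hf.continuousAt (hU.mem_nhds hmem_t)) (hf.continuousAt (hU.mem_nhds hmem_ct))
  have hpath : HasDerivAt (fun x : ℝ => (x, c - x)) ((1 : ℝ), (-1 : ℝ)) t :=
    (hasDerivAt_id t).prodMk ((hasDerivAt_id t).const_sub c)
  refine (hF.comp_hasDerivAt t hpath).congr_deriv ?_
  simp only [_root_.sub_apply, ContinuousLinearMap.smulRight_apply,
    ContinuousLinearMap.coe_snd', ContinuousLinearMap.coe_fst', neg_smul, one_smul, neg_add_rev]
  abel

end intervalIntegral

theorem Complex.norm_exp_I_mul_sub_one_pos {θ : ℝ} (h0 : 0 < θ) (h2π : θ < 2 * π) :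
    0 < ‖exp (I * θ) - 1‖ := by
  have := Real.sin_pos_of_pos_of_lt_pi (x := θ / 2) (by linarith) (by linarith)
  rw [norm_exp_I_mul_ofReal_sub_one, Real.norm_of_nonneg (by positivity)]
  positivity

theorem exp_neg_I_mul_natCast_sub_mul (j k : ℕ) (θ : ℝ) :
    exp (-I * ((j : ℂ) - k) * θ) = (starRingEnd ℂ) (exp (I * θ)) ^ j * exp (I * θ) ^ k := by
  rw [← exp_conj, map_mul, conj_I, conj_ofReal, ← exp_nat_mul, ← exp_nat_mul, ← exp_add]
  ring_nf

theorem uIcc_two_pi_sub_subset_Ioo {t : ℝ} (ht : t ∈ Ioo 0 π) :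
    uIcc t (2 * π - t) ⊆ Ioo 0 (2 * π) := by
  rw [Set.uIcc_of_le (by linarith [ht.2])]
  exact fun x hx => ⟨by linarith [ht.1, hx.1], by linarith [ht.1, hx.2]⟩

theorem continuousOn_fhWeight (α : ℝ) (β : ℂ) : ContinuousOn (fhWeight α β) (Ioo 0 (2 * π)) := by
  refine fun θ hθ => ContinuousAt.continuousWithinAt ?_
  have hnorm : ContinuousAt (fun x : ℝ => ‖exp (I * x) - 1‖) θ := by fun_prop
  exact (continuous_ofReal.continuousAt.comp (hnorm.rpow_const
    (Or.inl (norm_exp_I_mul_sub_one_pos hθ.1 hθ.2).ne'))).mul (by fun_prop)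

theorem conj_fhWeight (α : ℝ) {β : ℂ} (hβ : β.re = 0) (θ : ℝ) :
    (starRingEnd ℂ) (fhWeight α β θ) = fhWeight α β θ := by
  have hβ' : (starRingEnd ℂ) β = -β := Complex.ext (by simp [hβ]) (by simp)
  simp only [fhWeight, map_mul, conj_ofReal, ← exp_conj, map_sub, conj_I, hβ']
  ring_nf

section Inner

variable {α : ℝ} {β : ℂ} {t : ℝ}

theorem fhInner_conj_symm (hβ : β.re = 0) (f g : ℂ[X]) :
    fhInner α β t g f = (starRingEnd ℂ) (fhInner α β t f g) := by
  have hc : (starRingEnd ℂ) (1 / (2 * (π : ℂ))) = 1 / (2 * π) := by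
    rw [map_div₀, map_one, map_mul, map_ofNat, conj_ofReal]
  rw [fhInner, fhInner, map_mul, hc, ← intervalIntegral.integral_conj]
  congr 1
  refine intervalIntegral.integral_congr fun θ _ => ?_
  simp only [map_mul, conj_conj, conj_fhWeight α hβ]
  ring

theorem fhInner_eq_sum_coeff_mul (ht : t ∈ Ioo 0 π) {n : ℕ} {f : ℂ[X]} (g : ℂ[X])
    (hf : f.natDegree < n) :
    fhInner α β t f g = ∑ a ∈ range n, f.coeff a * fhInner α β t (X ^ a) g := by
  set z : ℝ → ℂ := fun θ => exp (I * θ)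
  have hterm (a : ℕ) : IntervalIntegrable
      (fun θ => (X ^ a : ℂ[X]).eval (z θ) * (starRingEnd ℂ) (g.eval (z θ)) * fhWeight α β θ)
      MeasureTheory.volume t (2 * π - t) :=
    ContinuousOn.intervalIntegrable (ContinuousOn.mul (Continuous.continuousOn (by fun_prop))
      ((continuousOn_fhWeight α β).mono (uIcc_two_pi_sub_subset_Ioo ht)))
  have hpt (θ : ℝ) : f.eval (z θ) * (starRingEnd ℂ) (g.eval (z θ)) * fhWeight α β θ
      = ∑ a ∈ range n, f.coeff a *
          ((X ^ a : ℂ[X]).eval (z θ) * (starRingEnd ℂ) (g.eval (z θ)) * fhWeight α β θ) := by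
    rw [eval_eq_sum_range' hf, sum_mul, sum_mul]
    refine sum_congr rfl fun a _ => ?_
    rw [eval_pow, eval_X]
    ring
  rw [fhInner, intervalIntegral.integral_congr fun θ _ => hpt θ,
    intervalIntegral.integral_finsetSum fun a _ => (hterm a).const_mul (f.coeff a), mul_sum]
  refine sum_congr rfl fun a _ => ?_
  rw [intervalIntegral.integral_const_mul, fhInner, mul_left_comm]

theorem fhInner_eq_sum_conj_coeff_mul (hβ : β.re = 0) (ht : t ∈ Ioo 0 π) {n : ℕ} (f : ℂ[X])
    {g : ℂ[X]} (hg : g.natDegree < n) :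
    fhInner α β t f g = ∑ b ∈ range n, (starRingEnd ℂ) (g.coeff b) * fhInner α β t f (X ^ b) := by
  rw [fhInner_conj_symm hβ g f, fhInner_eq_sum_coeff_mul ht f hg, map_sum]
  simp only [map_mul, ← fhInner_conj_symm hβ]

theorem fhInner_eq_zero_of_natDegree_lt (hβ : β.re = 0) (ht : t ∈ Ioo 0 π) {p q : ℂ[X]}
    {a : ℕ} (hp : ∀ j < a, fhInner α β t p (X ^ j) = 0) (hq : q.natDegree < a) :
    fhInner α β t p q = 0 := by
  rw [fhInner_eq_sum_conj_coeff_mul hβ ht p hq]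
  exact sum_eq_zero fun j hj => by rw [hp j (mem_range.mp hj), mul_zero]

end Inner

noncomputable def toeplitzMatrix (α : ℝ) (β : ℂ) (n : ℕ) (t : ℝ) : Matrix (Fin n) (Fin n) ℂ :=
  of fun j k : Fin n => (1 / (2 * (π : ℂ))) *
    ∫ θ in t..(2 * π - t), fhWeight α β θ * exp (-I * ((j.1 : ℂ) - (k.1 : ℂ)) * θ)

theorem toeplitzD_eq_det (α : ℝ) (β : ℂ) (n : ℕ) (t : ℝ) :
    toeplitzD α β n t = (toeplitzMatrix α β n t).det :=
  rfl

def powVec (n : ℕ) (z : ℂ) : Fin n → ℂ := fun i => z ^ (i : ℕ)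

noncomputable def toeplitzIntegrand (α : ℝ) (β : ℂ) (n : ℕ) (θ : ℝ) : Matrix (Fin n) (Fin n) ℂ :=
  fhWeight α β θ • vecMulVec (star (powVec n (exp (I * θ)))) (powVec n (exp (I * θ)))

def coeffMatrix (n : ℕ) (φ : ℕ → ℂ[X]) : Matrix (Fin n) (Fin n) ℂ :=
  of fun m j => (φ m).coeff j

section Toeplitz

variable {α : ℝ} {β : ℂ} {n : ℕ} {t : ℝ}

theorem toeplitzMatrix_apply (j k : Fin n) :
    toeplitzMatrix α β n t j k = fhInner α β t (X ^ (k : ℕ)) (X ^ (j : ℕ)) := by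
  rw [toeplitzMatrix, of_apply, fhInner]
  refine congrArg _ (intervalIntegral.integral_congr fun θ _ => ?_)
  simp only [exp_neg_I_mul_natCast_sub_mul, eval_pow, eval_X, map_pow]
  ring

theorem hasDerivAt_toeplitzMatrix_apply (ht : t ∈ Ioo 0 π) (j k : Fin n) :
    HasDerivAt (fun x => toeplitzMatrix α β n x j k)
      ((-(1 / (2 * (π : ℂ))) • (toeplitzIntegrand α β n t + toeplitzIntegrand α β n (2 * π - t)))
        j k) t := by
  set E : ℝ → ℂ := fun θ => fhWeight α β θ * exp (-I * ((j.1 : ℂ) - (k.1 : ℂ)) * θ)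
  have hE : ContinuousOn E (Ioo 0 (2 * π)) := (continuousOn_fhWeight α β).mul (by fun_prop)
  have hintegrand (θ : ℝ) : toeplitzIntegrand α β n θ j k = E θ := by
    simp only [E, toeplitzIntegrand, Matrix.smul_apply, vecMulVec_apply, powVec, Pi.star_apply,
      star_pow, star_def, smul_eq_mul, exp_neg_I_mul_natCast_sub_mul]
  refine ((intervalIntegral.hasDerivAt_integral_reflected isOpen_Ioo hE
    (uIcc_two_pi_sub_subset_Ioo ht)).const_mul (1 / (2 * (π : ℂ)))).congr_deriv ?_
  rw [Matrix.smul_apply, Matrix.add_apply, hintegrand, hintegrand, smul_eq_mul]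
  ring

variable {φ : ℕ → ℂ[X]}

theorem coeffMatrix_mulVec_powVec (hdeg : ∀ m : Fin n, (φ m).natDegree < n) (z : ℂ)
    (m : Fin n) : (coeffMatrix n φ *ᵥ powVec n z) m = (φ m).eval z := by
  rw [eval_eq_sum_range' (hdeg m), ← Fin.sum_univ_eq_sum_range]
  rfl

theorem map_conj_coeffMatrix_mul_toeplitzMatrix_mul_transpose (hβ : β.re = 0)
    (ht : t ∈ Ioo 0 π) (hdeg : ∀ m : Fin n, (φ m).natDegree < n) :
    (coeffMatrix n φ).map (starRingEnd ℂ) * toeplitzMatrix α β n t * (coeffMatrix n φ)ᵀ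
      = of fun m m' : Fin n => fhInner α β t (φ m') (φ m) := by
  ext m m'
  rw [of_apply, fhInner_eq_sum_conj_coeff_mul hβ ht _ (hdeg m), ← Fin.sum_univ_eq_sum_range]
  simp only [mul_apply, sum_mul, toeplitzMatrix_apply]
  rw [sum_comm]
  refine sum_congr rfl fun j _ => ?_
  rw [fhInner_eq_sum_coeff_mul ht _ (hdeg m'), ← Fin.sum_univ_eq_sum_range, mul_sum]
  refine sum_congr rfl fun l _ => ?_
  simp only [coeffMatrix, map_apply, transpose_apply, of_apply]
  ring

theorem toeplitzMatrix_mul_eq_one (hβ : β.re = 0) (ht : t ∈ Ioo 0 π) {χ : ℕ → ℝ}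
    (hdeg : ∀ m < n, (φ m).natDegree = m)
    (horth : ∀ m < n, ∀ j < m, fhInner α β t (φ m) (X ^ j) = 0)
    (hχ : ∀ m < n, χ m ≠ 0)
    (hnorm : ∀ m < n, fhInner α β t (φ m) (φ m) = (((χ m)⁻¹ ^ 2 : ℝ) : ℂ)) :
    toeplitzMatrix α β n t * ((coeffMatrix n φ)ᵀ *
      diagonal (fun m : Fin n => ((χ m ^ 2 : ℝ) : ℂ)) * (coeffMatrix n φ).map (starRingEnd ℂ))
      = 1 := by
  have hdeg' (m : Fin n) : (φ m).natDegree < n := (hdeg m m.isLt).trans_lt m.isLt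
  have horth' {a b : Fin n} (hba : b < a) : fhInner α β t (φ a) (φ b) = 0 :=
    fhInner_eq_zero_of_natDegree_lt hβ ht (horth a a.isLt) ((hdeg b b.isLt).trans_lt hba)
  refine mul_eq_one_of_mul_mul_eq_diagonal (e := fun m : Fin n => (((χ m)⁻¹ ^ 2 : ℝ) : ℂ)) ?_
    fun m => by rw [← ofReal_mul, ← mul_pow, inv_mul_cancel₀ (hχ m m.isLt), one_pow, ofReal_one]
  rw [map_conj_coeffMatrix_mul_toeplitzMatrix_mul_transpose hβ ht hdeg']
  ext m m'
  rcases lt_trichotomy m m' with hlt | rfl | hgt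
  · rw [of_apply, diagonal_apply_ne _ hlt.ne, horth' hlt]
  · rw [of_apply, diagonal_apply_eq, hnorm m m.isLt]
  · rw [of_apply, diagonal_apply_ne _ hgt.ne', fhInner_conj_symm hβ, horth' hgt, map_zero]

theorem trace_mul_toeplitzIntegrand (hdeg : ∀ m : Fin n, (φ m).natDegree < n) (d : ℕ → ℂ)
    (θ : ℝ) :
    trace ((coeffMatrix n φ)ᵀ * diagonal (fun m : Fin n => d m) *
        (coeffMatrix n φ).map (starRingEnd ℂ) * toeplitzIntegrand α β n θ)
      = fhWeight α β θ * ∑ k ∈ range n, d k * normSq ((φ k).eval (exp (I * θ))) := by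
  rw [toeplitzIntegrand, mul_smul_comm, trace_smul, mul_vecMulVec, trace_vecMulVec,
    transpose_mul_diagonal_mul_map_conj_mulVec_star_dotProduct, smul_eq_mul,
    ← Fin.sum_univ_eq_sum_range (fun k => d k * normSq ((φ k).eval (exp (I * θ))))]
  simp only [coeffMatrix_mulVec_powVec hdeg]

end Toeplitz

theorem toeplitz_logderiv_identity_general
    (α : ℝ) (β : ℂ) (hβ : β.re = 0) (n : ℕ)
    (φ : ℕ → ℝ → Polynomial ℂ) (χ : ℕ → ℝ → ℝ)
    (hdeg : ∀ k ≤ n, ∀ t ∈ Set.Ico (0 : ℝ) Real.pi, (φ k t).natDegree = k)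
    (horth : ∀ k ≤ n, ∀ t ∈ Set.Ico (0 : ℝ) Real.pi, ∀ j < k,
      fhInner α β t (φ k t) (Polynomial.X ^ j) = 0)
    (hχpos : ∀ k ≤ n, ∀ t ∈ Set.Ico (0 : ℝ) Real.pi, 0 < χ k t)
    (hχ : ∀ k ≤ n, ∀ t ∈ Set.Ico (0 : ℝ) Real.pi,
      fhInner α β t (φ k t) (φ k t) = (((χ k t)⁻¹ ^ 2 : ℝ) : ℂ)) :
    ∀ t ∈ Set.Ioo (0 : ℝ) Real.pi,
      HasDerivAt (fun x : ℝ => toeplitzD α β n x)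
        (toeplitzD α β n t *
          (-(1 / (2 * (Real.pi : ℂ))) *
            (fhWeight α β t *
                ∑ k ∈ Finset.range n, (((χ k t) ^ 2 : ℝ) : ℂ) *
                  ((Complex.normSq ((φ k t).eval (Complex.exp (Complex.I * t))) : ℝ) : ℂ)
              + fhWeight α β (2 * Real.pi - t) *
                ∑ k ∈ Finset.range n, (((χ k t) ^ 2 : ℝ) : ℂ) *
                  ((Complex.normSq ((φ k t).eval
                      (Complex.exp (Complex.I * (2 * Real.pi - t)))) : ℝ) : ℂ))))
        t := by
  intro t ht
  have htIco : t ∈ Ico 0 π := Ioo_subset_Ico_self ht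
  have hdeg' (m : Fin n) : (φ m t).natDegree < n := (hdeg m m.isLt.le t htIco).trans_lt m.isLt
  have hinv := toeplitzMatrix_mul_eq_one (α := α) hβ ht (φ := (φ · t)) (χ := (χ · t))
    (fun m hm => hdeg m hm.le t htIco) (fun m hm => horth m hm.le t htIco)
    (fun m hm => (hχpos m hm.le t htIco).ne') (fun m hm => hχ m hm.le t htIco)
  have hderiv := hasDerivAt_det (hasDerivAt_toeplitzMatrix_apply (α := α) (β := β) (n := n) ht)
  rw [adjugate_eq_det_smul_of_mul_eq_one hinv, smul_mul_assoc, trace_smul, mul_smul_comm,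
    trace_smul, Matrix.mul_add, trace_add,
    trace_mul_toeplitzIntegrand hdeg' (fun k => ((χ k t ^ 2 : ℝ) : ℂ)),
    trace_mul_toeplitzIntegrand hdeg' (fun k => ((χ k t ^ 2 : ℝ) : ℂ))] at hderiv
  simp only [toeplitzD_eq_det]
  refine hderiv.congr_deriv ?_
  push_cast [smul_eq_mul]
  rfl

/-- Differential identity for the Toeplitz determinant: if `φ_k(·;t)`
(`0 ≤ k ≤ n`) are the monic orthogonal polynomials for the Fisher–Hartwig
weight on the arc `(t, 2π−t)` and `χ_k(t)^{−2} = ⟨φ_k, φ_k⟩_t`, then on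
`(0, π)` the Toeplitz determinant `D_n` is differentiable and satisfies
`d/dt log D_n(t) = −(1/2π) Σ_{j=1}^2 w(θ_j) Σ_{k=0}^{n−1} χ_k(t)²|φ_k(z_j;t)|²`
with `θ₁ = t`, `θ₂ = 2π − t`, `z_j = e^{iθ_j}` (stated equivalently as
`D_n′(t) = D_n(t) ⋅ RHS`). -/
theorem toeplitz_logderiv_identity
    (α : ℝ) (hα : -1/2 < α) (β : ℂ) (hβ : β.re = 0) (n : ℕ) (hn : 1 ≤ n)
    (φ : ℕ → ℝ → Polynomial ℂ) (χ : ℕ → ℝ → ℝ)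
    (hmonic : ∀ k ≤ n, ∀ t ∈ Set.Ico (0 : ℝ) Real.pi, (φ k t).Monic)
    (hdeg : ∀ k ≤ n, ∀ t ∈ Set.Ico (0 : ℝ) Real.pi, (φ k t).natDegree = k)
    (horth : ∀ k ≤ n, ∀ t ∈ Set.Ico (0 : ℝ) Real.pi, ∀ j < k,
      fhInner α β t (φ k t) (Polynomial.X ^ j) = 0)
    (hχpos : ∀ k ≤ n, ∀ t ∈ Set.Ico (0 : ℝ) Real.pi, 0 < χ k t)
    (hχ : ∀ k ≤ n, ∀ t ∈ Set.Ico (0 : ℝ) Real.pi,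
      fhInner α β t (φ k t) (φ k t) = (((χ k t)⁻¹ ^ 2 : ℝ) : ℂ)) :
    ∀ t ∈ Set.Ioo (0 : ℝ) Real.pi,
      HasDerivAt (fun x : ℝ => toeplitzD α β n x)
        (toeplitzD α β n t *
          (-(1 / (2 * (Real.pi : ℂ))) *
            (fhWeight α β t *
                ∑ k ∈ Finset.range n, (((χ k t) ^ 2 : ℝ) : ℂ) *
                  ((Complex.normSq ((φ k t).eval (Complex.exp (Complex.I * t))) : ℝ) : ℂ)
              + fhWeight α β (2 * Real.pi - t) *
                ∑ k ∈ Finset.range n, (((χ k t) ^ 2 : ℝ) : ℂ) *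
                  ((Complex.normSq ((φ k t).eval
                      (Complex.exp (Complex.I * (2 * Real.pi - t)))) : ℝ) : ℂ))))
        t :=
  toeplitz_logderiv_identity_general α β hβ n φ χ hdeg horth hχpos hχ
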